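/- There exists a constant c' > 0 such that for all sufficiently large n and all m ≥ (1 + c')·n, for every Markov kernel f from {0,1}^n to {0,1}^m there exists p ∈ [0,1] with D_TV(((Bernoulli p)^{⊗n}).bind f, (Bernoulli p)^{⊗m}) > 1/3. (That is, the class of i.i.d. Bernoulli distributions with unknown bias cannot be amplified by more than a constant factor.) -/

import Mathlib

/-!
Suppose a Markov kernel `f` turns `n` tosses of a coin of bias `t` into a law `ε`-close in total
variation to `m` tosses, for every `t`. For the `K + 1` biases `i / K`, let `B i` be the set of
`m`-sequences whose empirical frequency lies within `1 / (2K)` of `i / K`. These windows are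
disjoint, and by Chebyshev's inequality (the variance of the Bernstein basis) `B i` has probability
at least `1 - K² / m` under `m` tosses of bias `i / K`, hence at least `1 - K² / m - ε` after
amplification. On the other hand a kernel spreads unit mass over disjoint sets, so these amplified
probabilities add up to at most `∑ₓ maxₜ ℙₜ {x} = ∑ₖ C(n, k) (k/n)^k (1 - k/n)^(n-k)`, and
Stirling's formula bounds this sum by `4 √(n + 1)`. For `ε = 1/3`, `K ≈ 10 √n` and `m ≥ 40000 n`
the two estimates contradict each other.
-/

open MeasureTheory ProbabilityTheory
open scoped NNReal ENNReal

/-- Total variation distance between two measures: the supremum over measurable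
sets `A` of `|μ A - ν A|`. -/
noncomputable def tvDist {Ω : Type*} [MeasurableSpace Ω] (μ ν : Measure Ω) : ℝ :=
  ⨆ A : {A : Set Ω // MeasurableSet A}, |(μ A).toReal - (ν A).toReal|

open Finset Real unitInterval
open scoped Nat

theorem sqrt_add_le_sqrt_add_sqrt {x y : ℝ} (hx : 0 ≤ x) (hy : 0 ≤ y) : √(x + y) ≤ √x + √y := by
  rw [sqrt_le_left (by positivity)]
  nlinarith [sq_sqrt hx, sq_sqrt hy, sqrt_nonneg x, sqrt_nonneg y]

theorem pow_mul_one_sub_pow_le {n k : ℕ} (hk : k ≤ n) {r : ℝ} (hr₀ : 0 ≤ r) (hr₁ : r ≤ 1) :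
    r ^ k * (1 - r) ^ (n - k) ≤ ((k : ℝ) / n) ^ k * (1 - k / n) ^ (n - k) := by
  obtain rfl | hk₀ := Nat.eq_zero_or_pos k
  · rcases Nat.eq_zero_or_pos n with rfl | hn
    · simp
    simpa [hn.ne'] using pow_le_one₀ (sub_nonneg.2 hr₁) (by linarith)
  obtain rfl | hkn := hk.eq_or_lt
  · simpa [hk₀.ne'] using pow_le_one₀ hr₀ hr₁
  set a : ℝ := k / n
  have hn : (0 : ℝ) < n := by exact_mod_cast hk₀.trans hkn
  have ha₀ : 0 < a := by positivity
  have ha₁ : 0 < 1 - a := by rw [sub_pos, div_lt_one hn]; exact_mod_cast hkn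
  have hr₀' : 0 ≤ r / a := div_nonneg hr₀ ha₀.le
  have hr₁' : 0 ≤ (1 - r) / (1 - a) := div_nonneg (sub_nonneg.2 hr₁) ha₁.le
  -- weighted AM–GM with weights `a = k / n` and `1 - a`, raised to the power `n`
  have hamgm : (r / a) ^ a * ((1 - r) / (1 - a)) ^ (1 - a) ≤ 1 := by
    convert geom_mean_le_arith_mean2_weighted ha₀.le ha₁.le hr₀' hr₁' (add_sub_cancel a 1)
      using 1
    field_simp
    ring
  have hpow : ∀ {b x : ℝ}, 0 ≤ x → (x ^ b) ^ n = x ^ (b * n) := fun hx => by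
    rw [← rpow_natCast, ← rpow_mul hx]
  have hk' : a * n = k := div_mul_cancel₀ _ hn.ne'
  have hl' : (1 - a) * n = ((n - k : ℕ) : ℝ) := by
    rw [Nat.cast_sub hkn.le, sub_mul, one_mul, hk']
  have hle := pow_le_one₀ (n := n) (by positivity) hamgm
  rw [mul_pow, hpow hr₀', hpow hr₁', hk', hl', rpow_natCast, rpow_natCast] at hle
  calc r ^ k * (1 - r) ^ (n - k)
      = (r / a) ^ k * ((1 - r) / (1 - a)) ^ (n - k) * (a ^ k * (1 - a) ^ (n - k)) := by
        rw [mul_mul_mul_comm, ← mul_pow, ← mul_pow, div_mul_cancel₀ _ ha₀.ne',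
          div_mul_cancel₀ _ ha₁.ne']
    _ ≤ a ^ k * (1 - a) ^ (n - k) := mul_le_of_le_one_left (by positivity) hle

theorem Stirling.factorial_le_exp_one_mul_sqrt_mul_pow {n : ℕ} (hn : n ≠ 0) :
    (n ! : ℝ) ≤ exp 1 * √n * (n / exp 1) ^ n := by
  obtain ⟨n, rfl⟩ := Nat.exists_eq_succ_of_ne_zero hn
  have h : Stirling.stirlingSeq (n + 1) ≤ exp 1 / √2 := by
    simpa [Stirling.stirlingSeq_one] using Stirling.stirlingSeq'_antitone (Nat.zero_le n)
  rw [Stirling.stirlingSeq, div_le_iff₀ (by positivity)] at h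
  refine h.trans_eq ?_
  rw [sqrt_mul zero_le_two]
  field_simp

theorem choose_mul_pow_mul_pow_le {n k : ℕ} (hk₀ : 0 < k) (hkn : k < n) :
    (n.choose k : ℝ) * ((k : ℝ) / n) ^ k * (1 - k / n) ^ (n - k) ≤
      (1 / √k + 1 / √(n - k : ℕ)) / 2 := by
  obtain ⟨l, rfl⟩ := Nat.exists_eq_add_of_le hkn.le
  have hk : (0 : ℝ) < k := by exact_mod_cast hk₀
  have hl : (0 : ℝ) < l := by exact_mod_cast (by omega : 0 < l)
  have hkl : (0 : ℝ) < k + l := by positivity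
  rw [Nat.cast_choose ℝ hkn.le, Nat.add_sub_cancel_left, Nat.cast_add,
    one_sub_div (by positivity), add_sub_cancel_left]
  calc ((k + l)! : ℝ) / (k ! * l !) * (k / (k + l)) ^ k * (l / (k + l)) ^ l
      ≤ exp 1 * √(k + l) * ((k + l) / exp 1) ^ (k + l) /
          (√(2 * π * k) * (k / exp 1) ^ k * (√(2 * π * l) * (l / exp 1) ^ l)) *
          (k / (k + l)) ^ k * (l / (k + l)) ^ l := by
        gcongr
        · exact_mod_cast Stirling.factorial_le_exp_one_mul_sqrt_mul_pow (n := k + l) (by omega)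
        · exact Stirling.le_factorial_stirling k
        · exact Stirling.le_factorial_stirling l
    _ = exp 1 / π * (√(k + l) / (2 * √k * √l)) := by
        rw [sqrt_mul (by positivity) (k : ℝ), sqrt_mul (by positivity) (l : ℝ),
          sqrt_mul zero_le_two π]
        simp only [div_pow, pow_add]
        field_simp
        rw [sq_sqrt zero_le_two, sq_sqrt pi_pos.le, mul_comm]
    _ ≤ √(k + l) / (2 * √k * √l) := by
        refine mul_le_of_le_one_left (by positivity) ((div_le_one pi_pos).2 ?_)
        linarith [exp_one_lt_d9, pi_gt_three]
    _ ≤ (√k + √l) / (2 * √k * √l) := by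
        gcongr
        exact sqrt_add_le_sqrt_add_sqrt hk.le hl.le
    _ = (1 / √k + 1 / √l) / 2 := by field_simp; ring

theorem choose_mul_pow_mul_pow_le_inv_sqrt {n k : ℕ} (hk : k ≤ n) :
    (n.choose k : ℝ) * ((k : ℝ) / n) ^ k * (1 - k / n) ^ (n - k) ≤
      1 / √(k + 1) + 1 / √((n - k : ℕ) + 1) := by
  have hinv : ∀ j : ℕ, 0 < j → 1 / √(j : ℝ) ≤ 2 / √(j + 1) := fun j hj => by
    have hj' : (1 : ℝ) ≤ j := by exact_mod_cast hj
    rw [div_le_div_iff₀ (by positivity) (by positivity), one_mul,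
      show (2 : ℝ) = √4 by rw [show (4 : ℝ) = 2 ^ 2 by norm_num, sqrt_sq zero_le_two],
      ← sqrt_mul (by norm_num)]
    exact sqrt_le_sqrt (by linarith)
  obtain rfl | hk₀ := Nat.eq_zero_or_pos k
  · have : 0 ≤ 1 / √((n : ℝ) + 1) := by positivity
    simp only [Nat.choose_zero_right, CharP.cast_eq_zero, zero_div, pow_zero, sub_zero, one_pow,
      mul_one, zero_add, Real.sqrt_one, Nat.sub_zero]
    linarith
  obtain rfl | hkn := hk.eq_or_lt
  · have : 0 ≤ 1 / √((k : ℝ) + 1) := by positivity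
    have hk' : (k : ℝ) ≠ 0 := by positivity
    simp only [Nat.choose_self, Nat.sub_self, div_self hk', Nat.cast_one, one_pow, pow_zero,
      mul_one, CharP.cast_eq_zero, zero_add, Real.sqrt_one]
    linarith
  have hl : 0 < n - k := Nat.sub_pos_of_lt hkn
  calc _ ≤ (1 / √k + 1 / √(n - k : ℕ)) / 2 := choose_mul_pow_mul_pow_le hk₀ hkn
    _ ≤ (2 / √(k + 1) + 2 / √((n - k : ℕ) + 1)) / 2 := by
        gcongr ?_ / _
        exact add_le_add (hinv k hk₀) (hinv _ hl)
    _ = _ := by ring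

theorem sum_range_inv_sqrt_succ_le (n : ℕ) : ∑ k ∈ range n, 1 / √((k : ℝ) + 1) ≤ 2 * √n := by
  induction n with
  | zero => simp
  | succ n ih =>
    rw [sum_range_succ, Nat.cast_succ]
    have hpos : 0 < √((n : ℝ) + 1) := by positivity
    have hsq : √((n : ℝ) + 1) ^ 2 = n + 1 := sq_sqrt (by positivity)
    have hsq' : √(n : ℝ) ^ 2 = n := sq_sqrt (by positivity)
    have : 1 / √((n : ℝ) + 1) ≤ 2 * √(n + 1) - 2 * √n := by
      rw [div_le_iff₀ hpos]
      nlinarith [sq_nonneg (√((n : ℝ) + 1) - √n)]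
    linarith

theorem sum_choose_mul_pow_mul_pow_le (n : ℕ) :
    ∑ k ∈ range (n + 1), (n.choose k : ℝ) * ((k : ℝ) / n) ^ k * (1 - k / n) ^ (n - k) ≤
      4 * √(n + 1) := by
  have hreflect : ∑ k ∈ range (n + 1), 1 / √(((n - k : ℕ) : ℝ) + 1) =
      ∑ k ∈ range (n + 1), 1 / √((k : ℝ) + 1) := by
    simpa using sum_range_reflect (fun k => 1 / √((k : ℝ) + 1)) (n + 1)
  calc _ ≤ ∑ k ∈ range (n + 1), (1 / √((k : ℝ) + 1) + 1 / √(((n - k : ℕ) : ℝ) + 1)) :=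
        sum_le_sum fun k hk =>
          choose_mul_pow_mul_pow_le_inv_sqrt (Nat.lt_succ_iff.1 (mem_range.1 hk))
    _ ≤ 4 * √(n + 1) := by
        rw [sum_add_distrib, hreflect]
        have := sum_range_inv_sqrt_succ_le (n + 1)
        push_cast at this
        linarith

theorem bernstein.one_sub_le_sum_near {n : ℕ} (hn : n ≠ 0) (x : I) {δ : ℝ} (hδ : 0 < δ) :
    1 - 1 / (4 * n * δ ^ 2) ≤
      ∑ k : Fin (n + 1) with |(x : ℝ) - bernstein.z k| < δ, bernstein n k x := by
  have hfar : ∑ k : Fin (n + 1) with ¬ |(x : ℝ) - bernstein.z k| < δ, bernstein n k x ≤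
      (x : ℝ) * (1 - x) / n / δ ^ 2 := by
    rw [← bernstein.variance hn, sum_div]
    refine (sum_le_sum fun k hk => ?_).trans
      (sum_le_sum_of_subset_of_nonneg (filter_subset _ _) fun k _ _ => by positivity)
    rw [le_div_iff₀ (by positivity), mul_comm]
    refine mul_le_mul_of_nonneg_right ?_ bernstein_nonneg
    rw [← sq_abs (_ - _)]
    exact pow_le_pow_left₀ hδ.le (not_lt.1 (mem_filter.1 hk).2) 2
  have hvar : (x : ℝ) * (1 - x) ≤ 1 / 4 := by nlinarith [sq_nonneg ((x : ℝ) - 1 / 2)]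
  have hsplit := sum_filter_add_sum_filter_not univ
    (fun k : Fin (n + 1) => |(x : ℝ) - bernstein.z k| < δ) (fun k => bernstein n k x)
  rw [bernstein.probability] at hsplit
  have : (x : ℝ) * (1 - x) / n / δ ^ 2 ≤ 1 / (4 * n * δ ^ 2) := by
    rw [div_div, div_le_div_iff₀ (by positivity) (by positivity)]
    have : (0 : ℝ) < n * δ ^ 2 := by positivity
    nlinarith
  linarith

theorem unitInterval.toNNReal_le_one (t : I) : unitInterval.toNNReal t ≤ 1 := t.2.2

theorem PMF.bernoulli_apply_toReal {p : ℝ≥0} (h : p ≤ 1) (b : Bool) :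
    (PMF.bernoulli p h b).toReal = if b then (p : ℝ) else 1 - p := by
  cases b <;> simp only [PMF.bernoulli_apply, cond_false, cond_true, ENNReal.coe_toReal,
    NNReal.coe_sub h, NNReal.coe_one, Bool.false_eq_true, if_true, if_false]

section BernoulliPi

variable {ι : Type*} [Fintype ι]

variable (ι) in
noncomputable def bernoulliPi (t : I) : Measure (ι → Bool) :=
  Measure.pi fun _ =>
    (PMF.bernoulli (unitInterval.toNNReal t) (unitInterval.toNNReal_le_one t)).toMeasure

instance (t : I) : IsProbabilityMeasure (bernoulliPi ι t) := by
  unfold bernoulliPi; infer_instance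

theorem bernoulliPi_real_singleton (t : I) (x : ι → Bool) :
    (bernoulliPi ι t).real {x} =
      (t : ℝ) ^ #{i | x i} * (1 - t) ^ (Fintype.card ι - #{i | x i}) := by
  rw [measureReal_def, bernoulliPi, Measure.pi_singleton, ENNReal.toReal_prod]
  simp only [PMF.toMeasure_apply_singleton _ _ (measurableSet_singleton _),
    PMF.bernoulli_apply_toReal, unitInterval.coe_toNNReal, prod_ite, prod_const]
  have hcard := card_filter_add_card_filter_not (s := univ) (fun i => x i = true)
  rw [Finset.card_univ] at hcard
  rw [← hcard, Nat.add_sub_cancel_left]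

variable [DecidableEq ι]

variable (ι) in
def boolFunEquivFinset : (ι → Bool) ≃ Finset ι where
  toFun x := {i | x i}
  invFun s i := i ∈ s
  left_inv x := by ext i; simp
  right_inv s := by ext i; simp

theorem Fintype.sum_boolFun_card {M : Type*} [AddCommMonoid M] (h : ℕ → M) :
    ∑ x : ι → Bool, h #{i | x i} =
      ∑ k ∈ range (Fintype.card ι + 1), (Fintype.card ι).choose k • h k := by
  rw [← Finset.card_univ, ← sum_powerset_apply_card, powerset_univ]
  exact Fintype.sum_equiv (boolFunEquivFinset ι) _ _ fun x => rfl

theorem bernoulliPi_real_setOf_card (t : I) (P : ℕ → Prop) [DecidablePred P] :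
    (bernoulliPi ι t).real {x | P #{i | x i}} =
      ∑ k : Fin (Fintype.card ι + 1) with P k.val, bernstein (Fintype.card ι) k t := by
  set N := Fintype.card ι
  calc _ = ∑ x : ι → Bool, if P #{i | x i} then (bernoulliPi ι t).real {x} else 0 := by
        rw [← sum_filter, sum_measureReal_singleton, coe_filter]; simp
    _ = ∑ k ∈ range (N + 1), N.choose k • if P k then (t : ℝ) ^ k * (1 - t) ^ (N - k) else 0 := by
        simp_rw [bernoulliPi_real_singleton]
        exact Fintype.sum_boolFun_card fun k => if P k then (t : ℝ) ^ k * (1 - t) ^ (N - k) else 0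
    _ = _ := by
        rw [sum_filter, ← Fin.sum_univ_eq_sum_range]
        simp [bernstein_apply, mul_assoc]

end BernoulliPi

theorem abs_measureReal_sub_le_tvDist {Ω : Type*} [MeasurableSpace Ω] (μ ν : Measure Ω)
    [IsFiniteMeasure μ] [IsFiniteMeasure ν] {A : Set Ω} (hA : MeasurableSet A) :
    |μ.real A - ν.real A| ≤ tvDist μ ν := by
  refine le_ciSup (f := fun A : {A : Set Ω // MeasurableSet A} => |μ.real A - ν.real A|)
    ⟨μ.real Set.univ + ν.real Set.univ, ?_⟩ ⟨A, hA⟩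
  rintro _ ⟨⟨B, -⟩, rfl⟩
  have hμ := measureReal_mono (μ := μ) (Set.subset_univ B)
  have hν := measureReal_mono (μ := ν) (Set.subset_univ B)
  rw [abs_sub_le_iff]
  constructor <;>
    linarith [measureReal_nonneg (μ := μ) (s := B), measureReal_nonneg (μ := ν) (s := B)]

theorem measureReal_bind_eq_sum {α β : Type*} [MeasurableSpace α] [MeasurableSingletonClass α]
    [Fintype α] [MeasurableSpace β] (μ : Measure α) [IsFiniteMeasure μ] (f : Kernel α β)
    [IsFiniteKernel f] {B : Set β} (hB : MeasurableSet B) :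
    (μ.bind f).real B = ∑ a, μ.real {a} * (f a).real B := by
  rw [measureReal_def, Measure.bind_apply hB f.measurable.aemeasurable, lintegral_fintype,
    ENNReal.toReal_sum fun a _ => ENNReal.mul_ne_top (measure_ne_top _ _) (measure_ne_top _ _)]
  simp only [ENNReal.toReal_mul, measureReal_def, mul_comm]

theorem sum_measureReal_bind_le {α β ι : Type*} [MeasurableSpace α] [MeasurableSingletonClass α]
    [Fintype α] [MeasurableSpace β] {μ : ι → Measure α} [∀ i, IsFiniteMeasure (μ i)]
    (f : Kernel α β) [IsMarkovKernel f] {s : Finset ι} {B : ι → Set β}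
    (hB : ∀ i ∈ s, MeasurableSet (B i)) (hdisj : (s : Set ι).PairwiseDisjoint B) {c : α → ℝ}
    (hc₀ : ∀ a, 0 ≤ c a) (hc : ∀ i ∈ s, ∀ a, (μ i).real {a} ≤ c a) :
    ∑ i ∈ s, ((μ i).bind f).real (B i) ≤ ∑ a, c a :=
  calc ∑ i ∈ s, ((μ i).bind f).real (B i)
      = ∑ i ∈ s, ∑ a, (μ i).real {a} * (f a).real (B i) :=
        sum_congr rfl fun i hi => measureReal_bind_eq_sum _ f (hB i hi)
    _ ≤ ∑ i ∈ s, ∑ a, c a * (f a).real (B i) := by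
        gcongr with i hi a
        exact hc i hi a
    _ = ∑ a, c a * (f a).real (⋃ i ∈ s, B i) := by
        rw [sum_comm]
        refine sum_congr rfl fun a _ => ?_
        rw [← mul_sum, measureReal_biUnion_finset hdisj hB]
    _ ≤ ∑ a, c a := sum_le_sum fun a _ => mul_le_of_le_one_right (hc₀ a) measureReal_le_one

theorem one_sub_le_bernoulliPi_real_near {m : ℕ} (hm : m ≠ 0) (t : I) {δ : ℝ} (hδ : 0 < δ) :
    1 - 1 / (4 * m * δ ^ 2) ≤
      (bernoulliPi (Fin m) t).real {y | |(t : ℝ) - #{j | y j} / m| < δ} := by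
  have := bernstein.one_sub_le_sum_near (n := Fintype.card (Fin m)) (by simpa using hm) t hδ
  rw [bernoulliPi_real_setOf_card (P := fun k => |(t : ℝ) - k / m| < δ)]
  convert this using 2
  · simp
  · ext k
    simp [bernstein.z]

theorem pairwiseDisjoint_abs_sub_z_lt {α : Type*} {K : ℕ} (g : α → ℝ) :
    ((univ : Finset (Fin (K + 1))) : Set (Fin (K + 1))).PairwiseDisjoint
      fun i => {y | |(bernstein.z i : ℝ) - g y| < 1 / (2 * K)} := by
  intro i _ j _ hij
  refine Set.disjoint_left.2 fun y hyi hyj => ?_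
  simp only [Set.mem_setOf_eq] at hyi hyj
  have hij' : (1 : ℝ) ≤ |((i : ℕ) : ℝ) - (j : ℕ)| := by
    have hne : ((i : ℕ) : ℤ) ≠ (j : ℕ) := by exact_mod_cast Fin.val_ne_of_ne hij
    exact_mod_cast Int.one_le_abs (sub_ne_zero.2 hne)
  have hsep : 1 / K ≤ |(bernstein.z i : ℝ) - bernstein.z j| := by
    simp only [bernstein.z, ← sub_div, abs_div, Nat.abs_cast]
    exact div_le_div_of_nonneg_right hij' (Nat.cast_nonneg K)
  have htri := abs_sub_le (bernstein.z i : ℝ) (g y) (bernstein.z j)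
  rw [abs_sub_comm (g y)] at htri
  have : 1 / (2 * (K : ℝ)) + 1 / (2 * K) = 1 / K := by ring
  linarith

theorem sum_measureReal_bind_bernoulliPi_le {n : ℕ} {β ι : Type*} [MeasurableSpace β]
    (f : Kernel (Fin n → Bool) β) [IsMarkovKernel f] (t : ι → I) {s : Finset ι}
    {B : ι → Set β} (hB : ∀ i ∈ s, MeasurableSet (B i)) (hdisj : (s : Set ι).PairwiseDisjoint B) :
    ∑ i ∈ s, ((bernoulliPi (Fin n) (t i)).bind f).real (B i) ≤ 4 * √(n + 1) := by
  let c (k : ℕ) : ℝ := ((k : ℝ) / n) ^ k * (1 - k / n) ^ (n - k)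
  have hcard : ∀ y : Fin n → Bool, #{j | y j} ≤ n := fun y =>
    (card_filter_le _ _).trans_eq (by simp)
  calc _ ≤ ∑ y : Fin n → Bool, c #{j | y j} := by
        refine sum_measureReal_bind_le f hB hdisj (fun y => ?_) fun i _ y => ?_
        · have : (#{j | y j} : ℝ) ≤ n := by exact_mod_cast hcard y
          have : 0 ≤ 1 - (#{j | y j} : ℝ) / n := by
            rcases Nat.eq_zero_or_pos n with rfl | hn
            · simp
            · rw [sub_nonneg, div_le_one (by positivity)]; assumption
          positivity
        · rw [bernoulliPi_real_singleton, Fintype.card_fin]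
          exact pow_mul_one_sub_pow_le (hcard y) (t i).2.1 (t i).2.2
    _ ≤ 4 * √(n + 1) := by
        rw [Fintype.sum_boolFun_card c, Fintype.card_fin]
        simpa only [nsmul_eq_mul, mul_assoc, c] using sum_choose_mul_pow_mul_pow_le n

theorem add_one_mul_le_of_forall_tvDist_bind_le {n m K : ℕ} (hm : m ≠ 0) (hK : K ≠ 0)
    (f : Kernel (Fin n → Bool) (Fin m → Bool)) [IsMarkovKernel f] {ε : ℝ}
    (hf : ∀ t : I, tvDist ((bernoulliPi (Fin n) t).bind f) (bernoulliPi (Fin m) t) ≤ ε) :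
    (K + 1) * (1 - K ^ 2 / m - ε) ≤ 4 * √(n + 1) := by
  let B (i : Fin (K + 1)) : Set (Fin m → Bool) :=
    {y | |(bernstein.z i : ℝ) - #{j | y j} / m| < 1 / (2 * K)}
  have hB : ∀ i, MeasurableSet (B i) := fun i => (Set.toFinite _).measurableSet
  have hlow : ∀ i,
      1 - K ^ 2 / m - ε ≤ ((bernoulliPi (Fin n) (bernstein.z i)).bind f).real (B i) := by
    intro i
    have htrue := one_sub_le_bernoulliPi_real_near hm (bernstein.z i)
      (by positivity : (0 : ℝ) < 1 / (2 * K))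
    have htv := (abs_sub_le_iff.1 (abs_measureReal_sub_le_tvDist
      ((bernoulliPi (Fin n) (bernstein.z i)).bind f) (bernoulliPi (Fin m) (bernstein.z i))
      (hB i))).2
    have : 1 / (4 * m * (1 / (2 * K)) ^ 2) = (K : ℝ) ^ 2 / m := by field_simp; ring
    linarith [hf (bernstein.z i)]
  calc (K + 1) * (1 - K ^ 2 / m - ε) = ∑ _i : Fin (K + 1), (1 - K ^ 2 / m - ε) := by simp; ring
    _ ≤ ∑ i, ((bernoulliPi (Fin n) (bernstein.z i)).bind f).real (B i) :=
        sum_le_sum fun i _ => hlow i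
    _ ≤ 4 * √(n + 1) := sum_measureReal_bind_bernoulliPi_le f _ (fun i _ => hB i)
        (pairwiseDisjoint_abs_sub_z_lt _)

/-- The class of i.i.d. Bernoulli distributions with unknown bias cannot be amplified by
more than a constant factor: for some `c' > 0` and all large `n`, no kernel from `n` to
`m ≥ (1+c')·n` samples fools every bias `p`. -/
theorem bernoulli_amplification_lower :
    ∃ c' : ℝ, 0 < c' ∧ ∃ N₀ : ℕ, ∀ n : ℕ, N₀ ≤ n → ∀ m : ℕ, (1 + c') * n ≤ m →
      ∀ f : Kernel (Fin n → Bool) (Fin m → Bool), IsMarkovKernel f →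
        ∃ (p : ℝ≥0∞) (hp : p ≤ 1),
          1 / 3 < tvDist
            ((Measure.pi fun _ : Fin n => (PMF.bernoulli p.toNNReal (by simpa using ENNReal.toNNReal_mono ENNReal.one_ne_top hp)).toMeasure).bind
              (fun x => f x))
            (Measure.pi fun _ : Fin m => (PMF.bernoulli p.toNNReal (by simpa using ENNReal.toNNReal_mono ENNReal.one_ne_top hp)).toMeasure) := by
  refine ⟨40000, by norm_num, 1, fun n hn m hm f _ => ?_⟩
  by_contra! hfool
  set s := Nat.sqrt n
  have hs : (1 : ℝ) ≤ s := by exact_mod_cast Nat.le_sqrt.2 (by omega : 1 * 1 ≤ n)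
  have hsn : (s : ℝ) ^ 2 ≤ n := by exact_mod_cast Nat.sqrt_le' n
  have hns : (n : ℝ) + 1 ≤ (s + 1) ^ 2 := by exact_mod_cast Nat.lt_succ_sqrt' n
  have hm₀ : m ≠ 0 := by
    rintro rfl
    have : (1 : ℝ) ≤ n := by exact_mod_cast hn
    push_cast at hm
    linarith
  have hK : ((10 * (s + 1) : ℕ) : ℝ) ^ 2 / m ≤ 1 / 100 := by
    rw [div_le_div_iff₀ (by positivity) (by norm_num)]
    push_cast
    nlinarith
  -- at `p = ↑(toNNReal t)` the measures of the statement are `bernoulliPi _ t` by definition,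
  -- since `(↑q : ℝ≥0∞).toNNReal` reduces to `q`
  have key := add_one_mul_le_of_forall_tvDist_bind_le (K := 10 * (s + 1)) hm₀ (by positivity) f
    (ε := 1 / 3) fun t =>
      hfool (unitInterval.toNNReal t) (ENNReal.coe_le_one_iff.2 (unitInterval.toNNReal_le_one t))
  have hsqrt : √((n : ℝ) + 1) ≤ s + 1 := (sqrt_le_left (by positivity)).2 hns
  push_cast at key hK
  nlinarith
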